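/- Assume d ≥ 2. For every δ > 0, ‖g(δ) − ∫_S sign(⟪∇S(x_t), u⟫) · u dσ(u)‖ ≤ 2·q(δ); that is, replacing the sign of S(x_t + δu) by the sign of the linearization ⟪∇S(x_t), u⟫ changes the population estimate by at most twice the σ-measure of the band {u ∈ S : |⟪∇S(x_t), u⟫| ≤ Lδ/2}. -/

import Mathlib

open MeasureTheory Metric Filter
open scoped RealInnerProductSpace ENNReal

/-- sign(t) = 1 if t > 0 and -1 otherwise. -/
noncomputable def sgn (t : ℝ) : ℝ := if 0 < t then 1 else -1

/-- The uniform probability measure on the unit sphere of `EuclideanSpace ℝ (Fin d)`: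
the (d-1)-dimensional Hausdorff measure restricted to the sphere, normalized to mass 1. -/
noncomputable def sphereUniform (d : ℕ) : Measure (EuclideanSpace ℝ (Fin d)) :=
  (μH[(d : ℝ) - 1] (Metric.sphere (0 : EuclideanSpace ℝ (Fin d)) 1))⁻¹ •
    (μH[(d : ℝ) - 1]).restrict (Metric.sphere (0 : EuclideanSpace ℝ (Fin d)) 1)

/-- The population gradient-direction estimate
`g(δ) = ∫_S sign(S (x_t + δ u)) · u dσ(u)`. -/
noncomputable def gEst (d : ℕ) (S : EuclideanSpace ℝ (Fin d) → ℝ)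
    (xt : EuclideanSpace ℝ (Fin d)) (δ : ℝ) : EuclideanSpace ℝ (Fin d) :=
  ∫ u, sgn (S (xt + δ • u)) • u ∂(sphereUniform d)

/-
Since `∇S` is `L`-Lipschitz and `S(x_t) = 0`, the second-order Taylor bound gives
`|S(x_t + δu) − δ⟪∇S(x_t), u⟫| ≤ Lδ²/2`, which is `< δ|⟪∇S(x_t), u⟫|` off the band.
So the two integrands `sign(·) • u` agree off the band, and on it they are unit vectors,
differing by at most 2.
-/

open Set

lemma abs_sgn (t : ℝ) : |sgn t| = 1 := by
  unfold sgn
  split <;> simp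

lemma norm_sgn_smul (t : ℝ) {E : Type*} [NormedAddCommGroup E] [NormedSpace ℝ E] (u : E) :
    ‖sgn t • u‖ = ‖u‖ := by
  rw [norm_smul, Real.norm_eq_abs, abs_sgn, one_mul]

lemma measurable_sgn : Measurable sgn :=
  Measurable.ite measurableSet_Ioi measurable_const measurable_const

lemma sgn_mul_of_pos {c : ℝ} (hc : 0 < c) (t : ℝ) : sgn (c * t) = sgn t := by
  simp only [sgn, mul_pos_iff_of_pos_left hc]

lemma sgn_eq_of_abs_sub_lt {a b : ℝ} (h : |a - b| < |b|) : sgn a = sgn b := by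
  unfold sgn
  cases abs_cases (a - b) <;> cases abs_cases b <;> split_ifs <;> linarith

theorem norm_image_add_sub_sub_fderiv_le {E F : Type*} [NormedAddCommGroup E] [NormedSpace ℝ E]
    [NormedAddCommGroup F] [NormedSpace ℝ F] {f : E → F} {f' : E → E →L[ℝ] F} {L : ℝ}
    (hf : ∀ y, HasFDerivAt f (f' y) y) (x : E) (hL : ∀ y, ‖f' y - f' x‖ ≤ L * ‖y - x‖) (v : E) :
    ‖f (x + v) - f x - f' x v‖ ≤ L / 2 * ‖v‖ ^ 2 := by
  set φ : ℝ → F := fun t ↦ f (x + t • v) - f x - t • f' x v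
  have hφ : ∀ t, HasDerivAt φ ((f' (x + t • v) - f' x) v) t := by
    intro t
    have hline : HasDerivAt (fun t : ℝ ↦ x + t • v) v t := by
      simpa using ((hasDerivAt_id t).smul_const v).const_add x
    refine ((((hf _).comp_hasDerivAt t hline).sub_const (f x)).sub
      ((hasDerivAt_id t).smul_const (f' x v))).congr_deriv ?_
    simp
  have hB : ∀ t, HasDerivAt (fun t : ℝ ↦ L / 2 * ‖v‖ ^ 2 * t ^ 2) (L * ‖v‖ ^ 2 * t) t := by
    intro t
    refine ((hasDerivAt_pow 2 t).const_mul (L / 2 * ‖v‖ ^ 2)).congr_deriv ?_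
    norm_num
    ring
  have hbound : ∀ t ∈ Ico (0 : ℝ) 1, ‖(f' (x + t • v) - f' x) v‖ ≤ L * ‖v‖ ^ 2 * t := by
    rintro t ⟨ht, -⟩
    calc ‖(f' (x + t • v) - f' x) v‖ ≤ ‖f' (x + t • v) - f' x‖ * ‖v‖ :=
          ContinuousLinearMap.le_opNorm _ _
      _ ≤ L * ‖t • v‖ * ‖v‖ := by
          gcongr
          simpa using hL (x + t • v)
      _ = L * ‖v‖ ^ 2 * t := by
          rw [norm_smul, Real.norm_of_nonneg ht]
          ring
  simpa [φ] using image_norm_le_of_norm_deriv_right_le_deriv_boundary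
    (fun t _ ↦ (hφ t).continuousAt.continuousWithinAt) (fun t _ ↦ (hφ t).hasDerivWithinAt)
    (by simp [φ]) hB hbound (right_mem_Icc.2 zero_le_one)

section Gradient

variable {E : Type*} [NormedAddCommGroup E] [InnerProductSpace ℝ E] [CompleteSpace E]
  {f : E → ℝ} {L : ℝ} {x : E}

theorem abs_sub_sub_inner_gradient_le (hf : Differentiable ℝ f)
    (hL : ∀ y, ‖gradient f y - gradient f x‖ ≤ L * ‖y - x‖) (v : E) :
    |f (x + v) - f x - ⟪gradient f x, v⟫| ≤ L / 2 * ‖v‖ ^ 2 := by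
  refine norm_image_add_sub_sub_fderiv_le
    (f' := fun y ↦ InnerProductSpace.toDual ℝ E (gradient f y))
    (fun y ↦ hasGradientAt_iff_hasFDerivAt.1 (hf y).hasGradientAt) x (fun y ↦ ?_) v
  rw [← map_sub, LinearIsometryEquiv.norm_map]
  exact hL y

theorem sgn_apply_add_smul_eq_sgn_inner {δ : ℝ} {u : E} (hf : Differentiable ℝ f)
    (hL : ∀ y, ‖gradient f y - gradient f x‖ ≤ L * ‖y - x‖)
    (hx : f x = 0) (hδ : 0 < δ) (hu : ‖u‖ = 1) (hband : L * δ / 2 < |⟪gradient f x, u⟫|) :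
    sgn (f (x + δ • u)) = sgn ⟪gradient f x, u⟫ := by
  rw [← sgn_mul_of_pos hδ ⟪gradient f x, u⟫]
  apply sgn_eq_of_abs_sub_lt
  have htaylor := abs_sub_sub_inner_gradient_le hf hL (δ • u)
  rw [hx, sub_zero, real_inner_smul_right, norm_smul, hu, Real.norm_of_nonneg hδ.le,
    mul_one] at htaylor
  calc |f (x + δ • u) - δ * ⟪gradient f x, u⟫| ≤ L / 2 * δ ^ 2 := htaylor
    _ = δ * (L * δ / 2) := by ring
    _ < δ * |⟪gradient f x, u⟫| := by gcongr
    _ = |δ * ⟪gradient f x, u⟫| := by rw [abs_mul, abs_of_pos hδ]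

end Gradient

theorem norm_integral_sub_integral_le_of_ae_eq_off {X E : Type*} [MeasurableSpace X]
    [NormedAddCommGroup E] [NormedSpace ℝ E] {μ : Measure X} {F G : X → E} {A : Set X} {C : ℝ}
    (hF : Integrable F μ) (hG : Integrable G μ) (hC : ∀ᵐ x ∂μ, ‖F x - G x‖ ≤ C)
    (hFG : ∀ᵐ x ∂μ, x ∉ A → F x = G x) (hA : μ A < ∞) :
    ‖∫ x, F x ∂μ - ∫ x, G x ∂μ‖ ≤ C * μ.real A := by
  rw [← integral_sub hF hG, ← setIntegral_eq_integral_of_ae_compl_eq_zero]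
  · exact norm_setIntegral_le_of_norm_le_const_ae' hA (hC.mono fun x hx _ ↦ hx)
  · filter_upwards [hFG] with x hx hxA
    rw [hx hxA, sub_self]

lemma sphereUniform_apply_le_one (d : ℕ) (s : Set (EuclideanSpace ℝ (Fin d))) :
    sphereUniform d s ≤ 1 := by
  rw [sphereUniform, Measure.smul_apply, smul_eq_mul,
    Measure.restrict_apply' isClosed_sphere.measurableSet]
  exact (mul_le_mul_right (measure_mono inter_subset_right) _).trans (ENNReal.inv_mul_le_one _)

instance (d : ℕ) : IsFiniteMeasure (sphereUniform d) :=
  ⟨(sphereUniform_apply_le_one d _).trans_lt ENNReal.one_lt_top⟩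

lemma ae_norm_eq_one_sphereUniform (d : ℕ) : ∀ᵐ u ∂(sphereUniform d), ‖u‖ = 1 :=
  (Measure.ae_smul_measure (ae_restrict_mem isClosed_sphere.measurableSet) _).mono
    fun _ hu ↦ mem_sphere_zero_iff_norm.1 hu

lemma integrable_sgn_smul_sphereUniform {d : ℕ} {f : EuclideanSpace ℝ (Fin d) → ℝ}
    (hf : Measurable f) : Integrable (fun u ↦ sgn (f u) • u) (sphereUniform d) :=
  .of_bound ((measurable_sgn.comp hf).smul measurable_id).aestronglyMeasurable 1 <|
    (ae_norm_eq_one_sphereUniform d).mono fun u hu ↦ by rw [norm_sgn_smul, hu]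

theorem stmt_4_general (d : ℕ) (L : ℝ)
    (S : EuclideanSpace ℝ (Fin d) → ℝ) (hS : Differentiable ℝ S)
    (hLip : ∀ x y : EuclideanSpace ℝ (Fin d),
      ‖gradient S x - gradient S y‖ ≤ L * ‖x - y‖)
    (xt : EuclideanSpace ℝ (Fin d)) (hxt : S xt = 0)
    (q : ℝ → ℝ)
    (hq : ∀ δ : ℝ, q δ =
      ((sphereUniform d) {u | |⟪gradient S xt, u⟫| ≤ L * δ / 2}).toReal)
    (δ : ℝ) (hδ : 0 < δ) :
    ‖gEst d S xt δ - ∫ u, sgn ⟪gradient S xt, u⟫ • u ∂(sphereUniform d)‖ ≤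
      2 * q δ := by
  have hF := integrable_sgn_smul_sphereUniform
    (hS.continuous.measurable.comp (by fun_prop : Measurable fun u ↦ xt + δ • u))
  have hG := integrable_sgn_smul_sphereUniform
    (by fun_prop : Measurable fun u : EuclideanSpace ℝ (Fin d) ↦ ⟪gradient S xt, u⟫)
  rw [hq]
  refine norm_integral_sub_integral_le_of_ae_eq_off hF hG ?_ ?_ (measure_lt_top _ _)
  · filter_upwards [ae_norm_eq_one_sphereUniform d] with u hu
    exact (norm_sub_le _ _).trans_eq <| by
      rw [norm_sgn_smul, norm_sgn_smul, hu, one_add_one_eq_two]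
  · filter_upwards [ae_norm_eq_one_sphereUniform d] with u hu hband
    rw [sgn_apply_add_smul_eq_sgn_inner hS (fun y ↦ hLip y xt) hxt hδ hu (not_le.1 hband)]

/-- For `d ≥ 2` and every `δ > 0`,
`‖g(δ) − ∫_S sign(⟪∇S(x_t),u⟫)·u dσ(u)‖ ≤ 2·q(δ)`, where
`q(δ) = σ({u : |⟪∇S(x_t),u⟫| ≤ Lδ/2})`. -/
theorem stmt_4 (d : ℕ) (hd : 2 ≤ d) (L : ℝ) (hL : 0 < L)
    (S : EuclideanSpace ℝ (Fin d) → ℝ) (hS : Differentiable ℝ S)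
    (hLip : ∀ x y : EuclideanSpace ℝ (Fin d),
      ‖gradient S x - gradient S y‖ ≤ L * ‖x - y‖)
    (xt : EuclideanSpace ℝ (Fin d)) (hxt : S xt = 0) (hgrad : gradient S xt ≠ 0)
    (q : ℝ → ℝ)
    (hq : ∀ δ : ℝ, q δ =
      ((sphereUniform d) {u | |⟪gradient S xt, u⟫| ≤ L * δ / 2}).toReal)
    (δ : ℝ) (hδ : 0 < δ) :
    ‖gEst d S xt δ - ∫ u, sgn ⟪gradient S xt, u⟫ • u ∂(sphereUniform d)‖ ≤
      2 * q δ :=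
  stmt_4_general d L S hS hLip xt hxt q hq δ hδ
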